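/- arXiv:2303.05478 — 2 statements merged into one kernel-verified Lean document; each statement's English description precedes it below -/
import Mathlib

section
/- With f₀(u) := (√(1-u) + √u·arcsin(√u))·√(1-u) − 1 for u ∈ [0,1], the constant κ₀ := (1/π)·( (1/π)·∫₀^∞ f₀(sech²v) dv + 1/2 ) equals (1/π)(1 − 2/π). -/
open Real MeasureTheory Set Filter Topology

/-!
Substitute `s = sech v`, so that `f₀ (sech² v) = s √(1 - s²) arcsin s - s²` and
`√(1 - s²) = tanh v`. Then the integrand is the derivative in `v` of
`-2 √(1 - s²) - s arcsin s`, which goes from `-π/2` at `v = 0` to `-2` at `v = ∞`; so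
`∫₀^∞ f₀(sech² v) dv = π/2 - 2`. The integrand is nonpositive (this is `θ ≤ tan θ` for
`θ = arcsin s`), which gives its integrability for free.
-/

noncomputable def kappaIntegrand (s : ℝ) : ℝ := s * √(1 - s ^ 2) * arcsin s - s ^ 2

noncomputable def kappaPrimitive (s : ℝ) : ℝ := -2 * √(1 - s ^ 2) - s * arcsin s

lemma arcsin_mul_sqrt_one_sub_sq_le {s : ℝ} (hs : 0 ≤ s) : arcsin s * √(1 - s ^ 2) ≤ s := by
  rcases lt_or_ge s 1 with hs₁ | hs₁
  · have hθ : arcsin s ≤ s / √(1 - s ^ 2) := tan_arcsin s ▸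
      le_tan (arcsin_nonneg.2 hs) (arcsin_lt_pi_div_two.2 hs₁)
    have ht : 0 < √(1 - s ^ 2) := sqrt_pos.2 (by nlinarith)
    rwa [le_div_iff₀ ht] at hθ
  · rw [sqrt_eq_zero_of_nonpos (by nlinarith), mul_zero]
    exact hs

lemma kappaIntegrand_nonpos {s : ℝ} (hs : 0 ≤ s) : kappaIntegrand s ≤ 0 := by
  have := mul_le_mul_of_nonneg_left (arcsin_mul_sqrt_one_sub_sq_le hs) hs
  unfold kappaIntegrand
  nlinarith

lemma hasDerivAt_kappaPrimitive {s : ℝ} (h₁ : -1 < s) (h₂ : s < 1) :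
    HasDerivAt kappaPrimitive (s / √(1 - s ^ 2) - arcsin s) s := by
  have ht : 0 < 1 - s ^ 2 := by nlinarith
  have hsqrt : HasDerivAt (fun s => √(1 - s ^ 2)) (-(2 * s) / (2 * √(1 - s ^ 2))) s := by
    simpa using ((hasDerivAt_pow 2 s).const_sub 1).sqrt ht.ne'
  refine ((hsqrt.const_mul (-2)).sub
    ((hasDerivAt_id' s).mul (hasDerivAt_arcsin h₁.ne' h₂.ne))).congr_deriv ?_
  have := (sqrt_pos.2 ht).ne'
  field_simp
  ring

lemma sqrt_one_sub_inv_cosh_sq {v : ℝ} (hv : 0 ≤ v) : √(1 - (cosh v)⁻¹ ^ 2) = tanh v := by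
  have hc := (cosh_pos v).ne'
  have h : 1 - (cosh v)⁻¹ ^ 2 = tanh v ^ 2 := by
    rw [tanh_eq_sinh_div_cosh]
    field_simp
    linarith [cosh_sq v]
  rw [h, sqrt_sq (tanh_eq_sinh_div_cosh v ▸ div_nonneg (sinh_nonneg_iff.2 hv) (cosh_pos v).le)]

lemma hasDerivAt_inv_cosh (v : ℝ) :
    HasDerivAt (fun v => (cosh v)⁻¹) (-((cosh v)⁻¹ * tanh v)) v := by
  refine ((hasDerivAt_cosh v).inv (cosh_pos v).ne').congr_deriv ?_
  rw [tanh_eq_sinh_div_cosh]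
  field_simp

lemma hasDerivAt_kappaPrimitive_inv_cosh {v : ℝ} (hv : 0 < v) :
    HasDerivAt (fun v => kappaPrimitive (cosh v)⁻¹) (kappaIntegrand (cosh v)⁻¹) v := by
  have hs₀ : 0 < (cosh v)⁻¹ := inv_pos.2 (cosh_pos v)
  have hs₁ : (cosh v)⁻¹ < 1 := inv_lt_one_of_one_lt₀ (one_lt_cosh.2 hv.ne')
  have ht : 0 < tanh v := by
    rw [tanh_eq_sinh_div_cosh]; exact div_pos (sinh_pos_iff.2 hv) (cosh_pos v)
  refine ((hasDerivAt_kappaPrimitive (by linarith) hs₁).comp v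
    (hasDerivAt_inv_cosh v)).congr_deriv ?_
  rw [kappaIntegrand, sqrt_one_sub_inv_cosh_sq hv.le]
  field_simp
  ring

lemma continuous_kappaPrimitive : Continuous kappaPrimitive := by
  unfold kappaPrimitive; fun_prop

lemma continuous_inv_cosh : Continuous fun v => (cosh v)⁻¹ :=
  continuous_cosh.inv₀ fun v => (cosh_pos v).ne'

lemma tendsto_cosh_atTop : Tendsto cosh atTop atTop := by
  refine tendsto_atTop_mono (fun v => ?_) (tendsto_exp_atTop.atTop_div_const two_pos)
  rw [cosh_eq]
  linarith [exp_pos (-v)]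

lemma tendsto_kappaPrimitive_inv_cosh :
    Tendsto (fun v => kappaPrimitive (cosh v)⁻¹) atTop (𝓝 (-2)) := by
  have h := (continuous_kappaPrimitive.tendsto 0).comp
    (tendsto_inv_atTop_zero.comp tendsto_cosh_atTop)
  simpa [kappaPrimitive, Function.comp_def] using h

lemma integral_kappaIntegrand_inv_cosh :
    ∫ v in Ioi 0, kappaIntegrand (cosh v)⁻¹ = π / 2 - 2 := by
  rw [integral_Ioi_of_hasDerivAt_of_nonpos
    (continuous_kappaPrimitive.comp continuous_inv_cosh).continuousWithinAt
    (fun v hv => hasDerivAt_kappaPrimitive_inv_cosh hv)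
    (fun v _ => kappaIntegrand_nonpos (inv_pos.2 (cosh_pos v)).le)
    tendsto_kappaPrimitive_inv_cosh]
  simp [kappaPrimitive, arcsin_one]
  ring

lemma kappaIntegrand_eq {s : ℝ} (hs : 0 ≤ s) (hs₁ : s ≤ 1) :
    (√(1 - s ^ 2) + √(s ^ 2) * arcsin √(s ^ 2)) * √(1 - s ^ 2) - 1 = kappaIntegrand s := by
  have := mul_self_sqrt (by nlinarith : 0 ≤ 1 - s ^ 2)
  rw [sqrt_sq hs, kappaIntegrand]
  linear_combination this

theorem stmt_13
    (f₀ : ℝ → ℝ)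
    (hf₀ : ∀ u ∈ Set.Icc (0:ℝ) 1,
      f₀ u = (Real.sqrt (1-u) + Real.sqrt u * Real.arcsin (Real.sqrt u)) * Real.sqrt (1-u) - 1) :
    (1/Real.pi) * ((1/Real.pi) * (∫ v in Set.Ioi (0:ℝ), f₀ ((1/Real.cosh v)^2)) + 1/2)
      = (1/Real.pi) * (1 - 2/Real.pi) := by
  have hI : ∫ v in Ioi 0, f₀ ((1 / cosh v) ^ 2) = π / 2 - 2 := by
    rw [← integral_kappaIntegrand_inv_cosh]
    refine setIntegral_congr_fun measurableSet_Ioi fun v _ => ?_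
    have hs₀ : 0 ≤ (cosh v)⁻¹ := (inv_pos.2 (cosh_pos v)).le
    have hs₁ : (cosh v)⁻¹ ≤ 1 := inv_le_one_of_one_le₀ (one_le_cosh v)
    rw [one_div, hf₀ _ ⟨sq_nonneg _, pow_le_one₀ hs₀ hs₁⟩, kappaIntegrand_eq hs₀ hs₁]
  rw [hI]
  field_simp
  ring
end

section
/- For τ > -1/2, both integrals ∫₀^∞ |f_τ(sech²v)| dv and ∫₀^∞ v·|f_τ(sech²v)| dv are finite. -/
/-!
Put `a = 2τ + 1 > 0`. On `(0, 1)` one has `|f_τ(u)| ≤ C u^(a/2)`. Indeed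
`Δ_τ(u) = u^(a/2) N(u) / G(u)`, where `N` and `G` both vanish to second order at `u = 1` and
`G` decreases from `G(0⁺) = 1`, so `N / G` is bounded; `Σ_τ` is bounded with
`Σ_τ(u) = 1 + O(u^a)` at `0`; and `√(1 - x²) + x arcsin x = 1 + O(x² + |x|)`. The estimates on
`N`, `G` and `Σ_τ` come from the signs of derivatives, e.g. `G'(x) = -a(1 + a) x^(a-1) (1 - x)`.
Since `sech v ≤ 2e^(-v)`, the integrands are then dominated by `C 2^a v^s e^(-av)`, `s ∈ {0, 1}`.
-/

open Real Set MeasureTheory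

theorem Convex.antitoneOn_of_hasDerivAt_nonpos {D : Set ℝ} (hD : Convex ℝ D) {F F' : ℝ → ℝ}
    (hF : ∀ x ∈ D, HasDerivAt F (F' x) x) (hF' : ∀ x ∈ D, F' x ≤ 0) : AntitoneOn F D :=
  antitoneOn_of_hasDerivWithinAt_nonpos hD (fun x hx ↦ (hF x hx).continuousAt.continuousWithinAt)
    (fun x hx ↦ (hF x (interior_subset hx)).hasDerivWithinAt) fun x hx ↦ hF' x (interior_subset hx)

theorem Convex.monotoneOn_of_hasDerivAt_nonneg {D : Set ℝ} (hD : Convex ℝ D) {F F' : ℝ → ℝ}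
    (hF : ∀ x ∈ D, HasDerivAt F (F' x) x) (hF' : ∀ x ∈ D, 0 ≤ F' x) : MonotoneOn F D :=
  monotoneOn_of_hasDerivWithinAt_nonneg hD (fun x hx ↦ (hF x hx).continuousAt.continuousWithinAt)
    (fun x hx ↦ (hF x (interior_subset hx)).hasDerivWithinAt) fun x hx ↦ hF' x (interior_subset hx)

theorem Real.one_sub_rpow_le_max_mul {a u : ℝ} (hu : 0 < u) (hu1 : u ≤ 1) :
    1 - u ^ a ≤ max a 1 * (1 - u) := by
  rcases le_total a 1 with h | h
  · have : u ^ (1 : ℝ) ≤ u ^ a := rpow_le_rpow_of_exponent_ge hu hu1 h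
    rw [rpow_one] at this
    rw [max_eq_right h]
    linarith
  · have hb := one_add_mul_self_le_rpow_one_add (s := u - 1) (by linarith) h
    rw [add_sub_cancel] at hb
    rw [max_eq_left h]
    linarith

theorem Real.min_mul_le_one_sub_rpow {a u : ℝ} (ha : 0 ≤ a) (hu : 0 < u) (hu1 : u ≤ 1) :
    min a 1 * (1 - u) ≤ 1 - u ^ a := by
  rcases le_total a 1 with h | h
  · have hb := rpow_one_add_le_one_add_mul_self (s := u - 1) (by linarith) ha h
    rw [add_sub_cancel] at hb
    rw [min_eq_left h]
    linarith
  · have : u ^ a ≤ u ^ (1 : ℝ) := rpow_le_rpow_of_exponent_ge hu hu1 h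
    rw [rpow_one] at this
    rw [min_eq_right h]
    linarith

theorem Real.rpow_three_halves {x : ℝ} (hx : 0 ≤ x) : x ^ ((3 : ℝ) / 2) = x * √x := by
  rw [show (3 : ℝ) / 2 = 1 + 1 / 2 by norm_num, rpow_add' hx (by norm_num), rpow_one, sqrt_eq_rpow]

noncomputable section

namespace FTau

/- With `a = 2τ + 1`, the paper's `Δ_τ`, `Σ_τ`, `f_τ` are `delta a`, `sigma a`, `f a`. -/

def num (a u : ℝ) : ℝ := u * (1 - u ^ a) - a * (1 - u)

def den (a u : ℝ) : ℝ := 1 - u ^ a - a * u ^ a * (1 - u)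

def delta (a u : ℝ) : ℝ := u ^ (a / 2) * num a u / den a u

def sigma (a u : ℝ) : ℝ := den a u / (1 - u ^ a) ^ ((3 : ℝ) / 2)

def kernel (x : ℝ) : ℝ := √(1 - x ^ 2) + x * arcsin x

def f (a u : ℝ) : ℝ := kernel (delta a u) * sigma a u - 1

variable {a u : ℝ}

theorem hasDerivAt_num (a : ℝ) {x : ℝ} (hx : 0 < x) :
    HasDerivAt (num a) ((1 + a) * (1 - x ^ a)) x := by
  have hp := hasDerivAt_rpow_const (p := a) (Or.inl hx.ne')
  have hxa : x * x ^ (a - 1) = x ^ a := by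
    rw [mul_comm, ← rpow_add_one hx.ne', sub_add_cancel]
  have h := ((hasDerivAt_id' x).fun_mul ((hasDerivAt_const x 1).fun_sub hp)).fun_sub
    (((hasDerivAt_const x 1).fun_sub (hasDerivAt_id' x)).const_mul a)
  exact h.congr_deriv (by linear_combination (-a) * hxa)

theorem hasDerivAt_den (a : ℝ) {x : ℝ} (hx : 0 < x) :
    HasDerivAt (den a) (-(a * (1 + a)) * x ^ (a - 1) * (1 - x)) x := by
  have hp := hasDerivAt_rpow_const (p := a) (Or.inl hx.ne')
  have hxa : x * x ^ (a - 1) = x ^ a := by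
    rw [mul_comm, ← rpow_add_one hx.ne', sub_add_cancel]
  have h := ((hasDerivAt_const x 1).fun_sub hp).fun_sub
    ((hp.const_mul a).fun_mul ((hasDerivAt_const x 1).fun_sub (hasDerivAt_id' x)))
  exact h.congr_deriv (by linear_combination (-a) * hxa)

@[simp] theorem num_one (a : ℝ) : num a 1 = 0 := by simp [num]

@[simp] theorem den_one (a : ℝ) : den a 1 = 0 := by simp [den]

theorem num_nonpos (ha : 0 ≤ a) (hu : u ∈ Ioc 0 1) : num a u ≤ 0 := by
  have hmono : MonotoneOn (num a) (Ioc 0 1) :=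
    (convex_Ioc 0 1).monotoneOn_of_hasDerivAt_nonneg (fun x hx ↦ hasDerivAt_num a hx.1)
      fun x hx ↦ mul_nonneg (by linarith) (sub_nonneg.2 (rpow_le_one hx.1.le hx.2 ha))
  simpa using hmono hu (right_mem_Ioc.2 one_pos) hu.2

theorem neg_num_le (ha : 0 ≤ a) (hu : u ∈ Ioc 0 1) :
    -num a u ≤ (1 + a) * max a 1 / 2 * (1 - u) ^ 2 := by
  set K := (1 + a) * max a 1
  have hanti : AntitoneOn (fun x ↦ K / 2 * (1 - x) ^ 2 + num a x) (Ioc 0 1) := by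
    refine (convex_Ioc 0 1).antitoneOn_of_hasDerivAt_nonpos
      (F' := fun x ↦ -K * (1 - x) + (1 + a) * (1 - x ^ a)) (fun x hx ↦ ?_) fun x hx ↦ ?_
    · have h := ((((hasDerivAt_const x 1).fun_sub (hasDerivAt_id' x)).fun_pow 2).const_mul
        (K / 2)).fun_add (hasDerivAt_num a hx.1)
      exact h.congr_deriv (by ring)
    · have := mul_le_mul_of_nonneg_left (one_sub_rpow_le_max_mul (a := a) hx.1 hx.2)
        (by linarith : (0 : ℝ) ≤ 1 + a)
      linarith
  have := hanti hu (right_mem_Ioc.2 one_pos) hu.2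
  simp only [sub_self, num_one] at this
  linarith

theorem abs_num_le (ha : 0 ≤ a) (hu : u ∈ Ioc 0 1) :
    |num a u| ≤ (1 + a) * max a 1 / 2 * (1 - u) ^ 2 := by
  rw [abs_of_nonpos (num_nonpos ha hu)]
  exact neg_num_le ha hu

theorem den_antitoneOn (ha : 0 ≤ a) : AntitoneOn (den a) (Ioc 0 1) :=
  (convex_Ioc 0 1).antitoneOn_of_hasDerivAt_nonpos (fun x hx ↦ hasDerivAt_den a hx.1)
    fun x hx ↦ by
      have := mul_nonneg (by positivity : 0 ≤ a * (1 + a))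
        (mul_nonneg (rpow_nonneg hx.1.le (a - 1)) (sub_nonneg.2 hx.2))
      linarith

theorem mul_rpow_mul_one_sub_sq_le_den (ha : 0 ≤ a) (hu : u ∈ Ioc 0 1) :
    a * (1 + a) / 2 * u ^ a * (1 - u) ^ 2 ≤ den a u := by
  set c := a * (1 + a) / 2 * u ^ a
  have hanti : AntitoneOn (fun x ↦ den a x - c * (1 - x) ^ 2) (Icc u 1) := by
    refine (convex_Icc u 1).antitoneOn_of_hasDerivAt_nonpos
      (F' := fun x ↦ a * (1 + a) * (1 - x) * (u ^ a - x ^ (a - 1))) (fun x hx ↦ ?_) fun x hx ↦ ?_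
    · have h := (hasDerivAt_den a (hu.1.trans_le hx.1)).fun_sub
        ((((hasDerivAt_const x 1).fun_sub (hasDerivAt_id' x)).fun_pow 2).const_mul c)
      exact h.congr_deriv (by ring)
    · have hx0 : 0 < x := hu.1.trans_le hx.1
      have hxa : u ^ a ≤ x ^ (a - 1) := (rpow_le_rpow hu.1.le hx.1 ha).trans
        (rpow_le_rpow_of_exponent_ge hx0 hx.2 (by linarith))
      exact mul_nonpos_of_nonneg_of_nonpos
        (mul_nonneg (by positivity) (by linarith [hx.2])) (by linarith)
  have := hanti (left_mem_Icc.2 hu.2) (right_mem_Icc.2 hu.2) hu.2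
  simp only [den_one, sub_self] at this
  linarith

theorem den_pos (ha : 0 < a) (hu : u ∈ Ioo 0 1) : 0 < den a u := by
  have hpos : 0 < a * (1 + a) / 2 * u ^ a * (1 - u) ^ 2 := by
    have := rpow_pos_of_pos hu.1 a
    have : 0 < 1 - u := by linarith [hu.2]
    positivity
  exact hpos.trans_le (mul_rpow_mul_one_sub_sq_le_den ha.le (Ioo_subset_Ioc_self hu))

theorem exists_mul_one_sub_sq_le_den (ha : 0 < a) :
    ∃ c > 0, ∀ u ∈ Ioc (0 : ℝ) 1, c * (1 - u) ^ 2 ≤ den a u := by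
  have hhalf : (1 / 2 : ℝ) ∈ Ioc 0 1 := by norm_num
  set c := a * (1 + a) / 2 * (1 / 2 : ℝ) ^ a
  have hc : 0 < c := by positivity
  refine ⟨c * (1 - 1 / 2) ^ 2, by positivity, fun u hu ↦ ?_⟩
  rcases le_total u (1 / 2) with h | h
  · have hsq : (1 - u) ^ 2 ≤ 1 := by nlinarith [hu.1, hu.2]
    calc c * (1 - 1 / 2) ^ 2 * (1 - u) ^ 2 ≤ c * (1 - 1 / 2) ^ 2 :=
          mul_le_of_le_one_right (by positivity) hsq
      _ ≤ den a (1 / 2) := mul_rpow_mul_one_sub_sq_le_den ha.le hhalf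
      _ ≤ den a u := den_antitoneOn ha.le hu hhalf h
  · have hcu : c ≤ a * (1 + a) / 2 * u ^ a :=
      mul_le_mul_of_nonneg_left (rpow_le_rpow (by norm_num) h ha.le) (by positivity)
    calc c * (1 - 1 / 2) ^ 2 * (1 - u) ^ 2 ≤ c * (1 - u) ^ 2 := by
          gcongr; exact mul_le_of_le_one_right hc.le (by norm_num)
      _ ≤ a * (1 + a) / 2 * u ^ a * (1 - u) ^ 2 := by gcongr
      _ ≤ den a u := mul_rpow_mul_one_sub_sq_le_den ha.le hu

theorem den_le (ha : 0 ≤ a) (hu : u ∈ Ioc 0 1) : den a u ≤ (1 + a) * (1 - u) * (1 - u ^ a) := by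
  have hanti : AntitoneOn (fun x ↦ (1 + a) * (1 - x) * (1 - x ^ a) - den a x) (Ioc 0 1) := by
    refine (convex_Ioc 0 1).antitoneOn_of_hasDerivAt_nonpos
      (F' := fun x ↦ -(1 + a) * (1 - x ^ a)) (fun x hx ↦ ?_) fun x hx ↦ ?_
    · have hp := hasDerivAt_rpow_const (p := a) (Or.inl hx.1.ne')
      have h := ((((hasDerivAt_const x 1).fun_sub (hasDerivAt_id' x)).const_mul (1 + a)).fun_mul
        ((hasDerivAt_const x 1).fun_sub hp)).fun_sub (hasDerivAt_den a hx.1)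
      exact h.congr_deriv (by ring)
    · have := rpow_le_one hx.1.le hx.2 ha
      nlinarith
  have := hanti hu (right_mem_Ioc.2 one_pos) hu.2
  simp only [den_one, sub_self, mul_zero, zero_mul] at this
  linarith

theorem exists_abs_delta_le (ha : 0 < a) :
    ∃ D, ∀ u ∈ Ioo (0 : ℝ) 1, |delta a u| ≤ D * u ^ (a / 2) := by
  obtain ⟨c, hc, hden⟩ := exists_mul_one_sub_sq_le_den ha
  set K := (1 + a) * max a 1 / 2
  refine ⟨K / c, fun u hu ↦ ?_⟩
  have hu' := Ioo_subset_Ioc_self hu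
  have hpos : 0 < c * (1 - u) ^ 2 := mul_pos hc (pow_pos (sub_pos.2 hu.2) 2)
  have hratio : |num a u| / den a u ≤ K / c := by
    calc |num a u| / den a u ≤ K * (1 - u) ^ 2 / (c * (1 - u) ^ 2) :=
          div_le_div₀ (by positivity) (abs_num_le ha.le hu') hpos (hden u hu')
      _ = K / c := mul_div_mul_right _ _ (pow_pos (sub_pos.2 hu.2) 2).ne'
  rw [delta, abs_div, abs_mul, abs_of_pos (den_pos ha hu), abs_of_pos (rpow_pos_of_pos hu.1 _),
    mul_div_assoc, mul_comm]
  exact mul_le_mul_of_nonneg_right hratio (rpow_nonneg hu.1.le _)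

theorem sigma_nonneg (ha : 0 < a) (hu : u ∈ Ioo 0 1) : 0 ≤ sigma a u := by
  have : 0 ≤ 1 - u ^ a := sub_nonneg.2 (rpow_le_one hu.1.le hu.2.le ha.le)
  exact div_nonneg (den_pos ha hu).le (rpow_nonneg this _)

theorem sigma_le (ha : 0 < a) (hu : u ∈ Ioo 0 1) : sigma a u ≤ (1 + a) / √(min a 1) := by
  have hu' := Ioo_subset_Ioc_self hu
  have hP : 0 < 1 - u ^ a := sub_pos.2 (rpow_lt_one hu.1.le hu.2 ha)
  have hmin : 0 < min a 1 := lt_min ha one_pos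
  have hsqrt : √(min a 1) * (1 - u) ≤ √(1 - u ^ a) := by
    calc √(min a 1) * (1 - u) ≤ √(min a 1) * √(1 - u) := by
          gcongr; exact le_sqrt_self_iff.2 (by linarith [hu.1])
      _ = √(min a 1 * (1 - u)) := (sqrt_mul hmin.le _).symm
      _ ≤ √(1 - u ^ a) := sqrt_le_sqrt (min_mul_le_one_sub_rpow ha.le hu.1 hu.2.le)
  rw [sigma, rpow_three_halves hP.le, div_le_div_iff₀ (by positivity) (sqrt_pos.2 hmin)]
  calc den a u * √(min a 1) ≤ (1 + a) * (1 - u) * (1 - u ^ a) * √(min a 1) := by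
        gcongr; exact den_le ha.le hu'
    _ = (1 + a) * (1 - u ^ a) * (√(min a 1) * (1 - u)) := by ring
    _ ≤ (1 + a) * (1 - u ^ a) * √(1 - u ^ a) := by gcongr
    _ = (1 + a) * ((1 - u ^ a) * √(1 - u ^ a)) := by ring

theorem abs_sigma_sub_one_le (ha : 0 ≤ a) (hu : u ∈ Ioo 0 1) (hua : u ^ a ≤ 1 / 2) :
    |sigma a u - 1| ≤ 4 * (1 + a) * u ^ a := by
  set P := 1 - u ^ a
  have hua0 : 0 < u ^ a := rpow_pos_of_pos hu.1 a
  have hP : 1 / 2 ≤ P := by linarith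
  have hsqrt : P ≤ √P := le_sqrt_self_iff.2 (by linarith)
  have hsqrt1 : √P ≤ 1 := sqrt_le_one.2 (by linarith)
  have hD : 1 / 4 ≤ P * √P := by nlinarith
  have hnum : |den a u - P * √P| ≤ (1 + a) * u ^ a := by
    have h1 : den a u - P * √P = P * (1 - √P) - a * u ^ a * (1 - u) := by simp only [den, P]; ring
    have h2 : 0 ≤ a * u ^ a * (1 - u) := mul_nonneg (by positivity) (by linarith [hu.2])
    have h3 : a * u ^ a * (1 - u) ≤ a * u ^ a := by
      have := hu.1; nlinarith [mul_nonneg ha hua0.le]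
    have h4 : P * (1 - √P) ≤ u ^ a := by nlinarith
    rw [h1, abs_le]
    constructor <;> nlinarith
  have hDpos : 0 < P * √P := by linarith
  have hσ : sigma a u = den a u / (P * √P) := by rw [sigma, rpow_three_halves (by linarith)]
  rw [hσ, div_sub_one hDpos.ne', abs_div, abs_of_pos hDpos, div_le_iff₀ hDpos]
  calc |den a u - P * √P| ≤ (1 + a) * u ^ a := hnum
    _ = 4 * (1 + a) * u ^ a * (1 / 4) := by ring
    _ ≤ 4 * (1 + a) * u ^ a * (P * √P) := by gcongr

theorem exists_abs_sigma_sub_one_le (ha : 0 < a) :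
    ∃ E, ∀ u ∈ Ioo (0 : ℝ) 1, |sigma a u - 1| ≤ E * u ^ a := by
  set C₁ := (1 + a) / √(min a 1)
  refine ⟨max (4 * (1 + a)) (2 * (C₁ + 1)), fun u hu ↦ ?_⟩
  have hua0 : 0 < u ^ a := rpow_pos_of_pos hu.1 a
  rcases le_total (u ^ a) (1 / 2) with h | h
  · exact (abs_sigma_sub_one_le ha.le hu h).trans
      (mul_le_mul_of_nonneg_right (le_max_left _ _) hua0.le)
  · have hσ0 := sigma_nonneg ha hu
    have hσ1 := sigma_le ha hu
    have hC₁ : 0 ≤ C₁ := hσ0.trans hσ1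
    calc |sigma a u - 1| ≤ 2 * (C₁ + 1) * (1 / 2) := by rw [abs_le]; constructor <;> linarith
      _ ≤ 2 * (C₁ + 1) * u ^ a := by gcongr
      _ ≤ max (4 * (1 + a)) (2 * (C₁ + 1)) * u ^ a := by gcongr; exact le_max_right _ _

theorem abs_kernel_sub_one_le (x : ℝ) : |kernel x - 1| ≤ x ^ 2 + π / 2 * |x| := by
  have hsqrt : |√(1 - x ^ 2) - 1| ≤ x ^ 2 := by
    -- `1 - x ^ 2 ≤ √(1 - x ^ 2)` also when `1 - x ^ 2 < 0`, as `√` is then `0`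
    have h1 : 1 - x ^ 2 ≤ √(1 - x ^ 2) := le_sqrt_self_iff.2 (by nlinarith)
    have h2 : √(1 - x ^ 2) ≤ 1 := sqrt_le_one.2 (by nlinarith)
    rw [abs_le]; constructor <;> linarith
  have harcsin : |x * arcsin x| ≤ π / 2 * |x| := by
    rw [abs_mul, mul_comm]
    exact mul_le_mul_of_nonneg_right (abs_le.2 ⟨neg_pi_div_two_le_arcsin x, arcsin_le_pi_div_two x⟩)
      (abs_nonneg x)
  calc |kernel x - 1| = |(√(1 - x ^ 2) - 1) + x * arcsin x| := by rw [kernel]; ring_nf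
    _ ≤ |√(1 - x ^ 2) - 1| + |x * arcsin x| := abs_add_le _ _
    _ ≤ x ^ 2 + π / 2 * |x| := add_le_add hsqrt harcsin

theorem exists_abs_f_le (ha : 0 < a) :
    ∃ C, ∀ u ∈ Ioo (0 : ℝ) 1, |f a u| ≤ C * u ^ (a / 2) := by
  obtain ⟨D, hD⟩ := exists_abs_delta_le ha
  obtain ⟨E, hE⟩ := exists_abs_sigma_sub_one_le ha
  set C₁ := (1 + a) / √(min a 1)
  refine ⟨(D ^ 2 + π / 2 * D) * C₁ + E, fun u hu ↦ ?_⟩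
  set w := u ^ (a / 2)
  have hw0 : 0 < w := rpow_pos_of_pos hu.1 _
  have hw1 : w ≤ 1 := rpow_le_one hu.1.le hu.2.le (by positivity)
  have hua : u ^ a = w ^ 2 := by rw [← rpow_natCast, ← rpow_mul hu.1.le]; norm_num
  have hw2 : w ^ 2 ≤ w := pow_le_of_le_one hw0.le hw1 two_ne_zero
  have hΔ := hD u hu
  have hσ0 := sigma_nonneg ha hu
  have hσ1 := sigma_le ha hu
  have hσ := hE u hu
  rw [hua] at hσ
  have hE0 : 0 ≤ E := nonneg_of_mul_nonneg_left ((abs_nonneg _).trans hσ) (by positivity)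
  have hΔsq : delta a u ^ 2 ≤ D ^ 2 * w ^ 2 := by
    rw [← sq_abs, ← mul_pow]; exact pow_le_pow_left₀ (abs_nonneg _) hΔ 2
  have hkernel : |kernel (delta a u) - 1| ≤ (D ^ 2 + π / 2 * D) * w := by
    calc |kernel (delta a u) - 1| ≤ delta a u ^ 2 + π / 2 * |delta a u| := abs_kernel_sub_one_le _
      _ ≤ D ^ 2 * w ^ 2 + π / 2 * (D * w) := by gcongr
      _ ≤ D ^ 2 * w + π / 2 * (D * w) := by gcongr
      _ = (D ^ 2 + π / 2 * D) * w := by ring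
  calc |f a u| = |(kernel (delta a u) - 1) * sigma a u + (sigma a u - 1)| := by rw [f]; ring_nf
    _ ≤ |kernel (delta a u) - 1| * sigma a u + |sigma a u - 1| := by
        rw [← abs_of_nonneg hσ0, ← abs_mul, abs_of_nonneg hσ0]; exact abs_add_le _ _
    _ ≤ (D ^ 2 + π / 2 * D) * w * C₁ + E * w := by
        gcongr
        · exact (abs_nonneg _).trans hkernel
        · exact hσ.trans (mul_le_mul_of_nonneg_left hw2 hE0)
    _ = ((D ^ 2 + π / 2 * D) * C₁ + E) * w := by ring

theorem measurable_f (a : ℝ) : Measurable (f a) := by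
  unfold f kernel delta sigma num den
  fun_prop

end FTau

end

theorem Real.sech_sq_mem_Ioo {v : ℝ} (hv : v ≠ 0) : (1 / cosh v) ^ 2 ∈ Ioo 0 1 := by
  have hc : 1 < cosh v := one_lt_cosh.2 hv
  have h1 : 1 / cosh v < 1 := (div_lt_one (by linarith)).2 hc
  have h0 : 0 < 1 / cosh v := by positivity
  exact ⟨by positivity, pow_lt_one₀ h0.le h1 two_ne_zero⟩

theorem Real.sech_sq_rpow_le {a : ℝ} (ha : 0 ≤ a) (v : ℝ) :
    ((1 / cosh v) ^ 2) ^ (a / 2) ≤ 2 ^ a * exp (-(a * v)) := by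
  have h0 : 0 < 1 / cosh v := by positivity
  have hsech : 1 / cosh v ≤ 2 * exp (-v) := by
    have he : exp (-v) * exp v = 1 := by rw [← exp_add, neg_add_cancel, exp_zero]
    rw [div_le_iff₀ (cosh_pos v), cosh_eq]
    nlinarith [sq_nonneg (exp (-v))]
  calc ((1 / cosh v) ^ 2) ^ (a / 2) = (1 / cosh v) ^ a := by
        rw [← rpow_natCast, ← rpow_mul h0.le]; congr 1; push_cast; ring
    _ ≤ (2 * exp (-v)) ^ a := rpow_le_rpow h0.le hsech ha
    _ = 2 ^ a * exp (-(a * v)) := by rw [mul_rpow (by norm_num) (exp_pos _).le, ← exp_mul]; ring_nf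

theorem integrableOn_rpow_mul_abs_comp_sech_sq {g : ℝ → ℝ} {a C s : ℝ} (ha : 0 < a) (hs : -1 < s)
    (hg : Measurable g) (hbound : ∀ u ∈ Ioo (0 : ℝ) 1, |g u| ≤ C * u ^ (a / 2)) :
    IntegrableOn (fun v ↦ v ^ s * |g ((1 / cosh v) ^ 2)|) (Ioi 0) := by
  have hmajor : IntegrableOn (fun v ↦ C * 2 ^ a * (v ^ s * exp (-a * v ^ (1 : ℝ)))) (Ioi 0) :=
    (integrableOn_rpow_mul_exp_neg_mul_rpow hs one_pos ha).const_mul _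
  refine hmajor.mono' (by fun_prop) ((ae_restrict_iff' measurableSet_Ioi).2 (.of_forall ?_))
  intro v (hv : 0 < v)
  have hu := sech_sq_mem_Ioo hv.ne'
  have hbv := hbound _ hu
  have hC : 0 ≤ C :=
    nonneg_of_mul_nonneg_left ((abs_nonneg _).trans hbv) (rpow_pos_of_pos hu.1 _)
  rw [norm_mul, norm_abs_eq_norm, norm_of_nonneg (rpow_nonneg hv.le s), rpow_one]
  calc v ^ s * ‖g ((1 / cosh v) ^ 2)‖ ≤ v ^ s * (C * (2 ^ a * exp (-(a * v)))) := by
        gcongr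
        exact hbv.trans (mul_le_mul_of_nonneg_left (sech_sq_rpow_le ha.le v) hC)
    _ = C * 2 ^ a * (v ^ s * exp (-a * v)) := by ring_nf

theorem stmt_16_general (τ : ℝ) (hτ : τ > -1/2)
    (Δ Sg f : ℝ → ℝ)
    (hΔ : ∀ u ∈ Set.Ioo (0:ℝ) 1, Δ u =
      u^(τ+1/2) * (u*(1 - u^(2*τ+1)) - (2*τ+1)*(1-u)) /
        (1 - u^(2*τ+1) - (2*τ+1)*u^(2*τ+1)*(1-u)))
    (hSg : ∀ u ∈ Set.Ioo (0:ℝ) 1, Sg u =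
      (1 - u^(2*τ+1) - (2*τ+1)*(1-u)*u^(2*τ+1)) / (1 - u^(2*τ+1))^((3:ℝ)/2))
    (hf : ∀ u ∈ Set.Ioo (0:ℝ) 1, f u =
      (Real.sqrt (1 - (Δ u)^2) + Δ u * Real.arcsin (Δ u)) * Sg u - 1) :
    MeasureTheory.IntegrableOn (fun v : ℝ => |f ((1/Real.cosh v)^2)|) (Set.Ioi 0) ∧
    MeasureTheory.IntegrableOn (fun v : ℝ => v * |f ((1/Real.cosh v)^2)|) (Set.Ioi 0) := by
  have ha : 0 < 2 * τ + 1 := by linarith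
  have hf_eq : ∀ u ∈ Ioo (0 : ℝ) 1, f u = FTau.f (2 * τ + 1) u := by
    intro u hu
    have hΔu : Δ u = FTau.delta (2 * τ + 1) u := by
      rw [hΔ u hu, FTau.delta, FTau.num, FTau.den, show τ + 1 / 2 = (2 * τ + 1) / 2 by ring]
    have hSgu : Sg u = FTau.sigma (2 * τ + 1) u := by
      rw [hSg u hu, FTau.sigma, FTau.den, mul_right_comm _ (1 - u)]
    rw [hf u hu, hΔu, hSgu, FTau.f, FTau.kernel]
  obtain ⟨C, hC⟩ := FTau.exists_abs_f_le ha
  have key (s : ℝ) (hs : -1 < s) :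
      IntegrableOn (fun v ↦ v ^ s * |f ((1 / cosh v) ^ 2)|) (Ioi 0) :=
    (integrableOn_rpow_mul_abs_comp_sech_sq ha hs (FTau.measurable_f _) hC).congr_fun
      (fun v (hv : 0 < v) ↦ by rw [hf_eq _ (sech_sq_mem_Ioo hv.ne')]) measurableSet_Ioi
  exact ⟨by simpa using key 0 (by norm_num), by simpa using key 1 (by norm_num)⟩

theorem stmt_16 (τ : ℝ) (hτ : τ > -1/2)
    (Δ Sg f : ℝ → ℝ)
    (hΔ : ∀ u ∈ Set.Ioo (0:ℝ) 1, Δ u =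
      u^(τ+1/2) * (u*(1 - u^(2*τ+1)) - (2*τ+1)*(1-u)) /
        (1 - u^(2*τ+1) - (2*τ+1)*u^(2*τ+1)*(1-u)))
    (hSg : ∀ u ∈ Set.Ioo (0:ℝ) 1, Sg u =
      (1 - u^(2*τ+1) - (2*τ+1)*(1-u)*u^(2*τ+1)) / (1 - u^(2*τ+1))^((3:ℝ)/2))
    (hf : ∀ u ∈ Set.Ioo (0:ℝ) 1, f u =
      (Real.sqrt (1 - (Δ u)^2) + Δ u * Real.arcsin (Δ u)) * Sg u - 1)
    (hf0 : f 0 = 0) (hf1 : f 1 = -1) :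
    MeasureTheory.IntegrableOn (fun v : ℝ => |f ((1/Real.cosh v)^2)|) (Set.Ioi 0) ∧
    MeasureTheory.IntegrableOn (fun v : ℝ => v * |f ((1/Real.cosh v)^2)|) (Set.Ioi 0) :=
  stmt_16_general τ hτ Δ Sg f hΔ hSg hf
end
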